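/- arXiv:2511.20369 — 7 statements merged into one kernel-verified Lean document; each statement's English description precedes it below -/
import Mathlib

section
/- If there exists a safe invariant domain for the Petri program P, then P is correct. -/
/-!
Common semantic framework for "The Ghosts of Empires":
Petri programs, Hoare triples, invariant domains, Owicki-Gries annotations,
territories, empires, saturated empires, focus.
-/

namespace GhostsOfEmpires

/-- Reachable states of a (partial) state machine with transition alphabet `T`. -/
inductive EmpReach {Q T : Type*} (q0 : Q) (δ : Q → T → Option Q) : Q → Prop
  | init : EmpReach q0 δ q0
  | step {q : Q} {t : T} {q' : Q} : EmpReach q0 δ q → δ q t = some q' → EmpReach q0 δ q'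

/-- Restriction of a partial transition function to the reachable part. -/
def restrictδ {Q T : Type*} (q0 : Q) (δ : Q → T → Option Q)
    (q : {q : Q // EmpReach q0 δ q}) (t : T) : Option {q : Q // EmpReach q0 δ q} :=
  match h : δ q.val t with
  | none => none
  | some q' => some ⟨q', EmpReach.step q.property h⟩

/-- A Petri program: places, transitions, flow relation (given by `pre`/`post`),
initial marking, statement labels, error places, and a semantics for statements
(formulas over the program variables are modelled semantically as predicates on `State`,
the type of valuations of the program variables). Since the program is assumed one-safe,
markings are identified with sets of places. -/
structure PetriNet (Place Trans Stmt State : Type*) where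
  pre : Trans → Set Place
  post : Trans → Set Place
  mInit : Set Place
  label : Trans → Stmt
  err : Set Place
  sem : Stmt → State → State → Prop

/-- Owicki-Gries annotation: ghost state type `GS` (the product of the domains of the
ghost variables), invariant mapping `ω` (formulas over program and ghost variables),
ghost update mapping `γ` (executed after the statement of the transition), and
initial ghost valuation `ρ`. -/
structure OG (Place Trans State GS : Type*) where
  ω : Place → State → GS → Prop
  γ : Trans → State → GS → GS
  ρ : GS

/-- The data of an empire: a state machine with laws and territories. -/
structure EmpireData (Place Trans State Q : Type*) where
  qInit : Q
  δ : Q → Trans → Option Q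
  law : Q → State → Prop
  terr : Q → Set (Set Place)

/-- `Q_p`: the set of empire states whose territory contains `p` in some region. -/
def Qp {Place Trans State Q : Type*} (E : EmpireData Place Trans State Q) (p : Place) :
    Set Q :=
  {q | ∃ r ∈ E.terr q, p ∈ r}

/-- The imperial Owicki-Gries annotation of an empire: one ghost variable `g` ranging
over the states `Q`, initialized to `qInit`, updated according to `δ`, and
`ω(p) = ⋁_{q ∈ Q_p} (g = q ∧ law q)`. -/
def imperialOG {Place Trans State Q : Type*} (E : EmpireData Place Trans State Q) :
    OG Place Trans State Q where
  ω := fun p s g => ∃ q ∈ Qp E p, g = q ∧ E.law q s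
  γ := fun t _ g => (E.δ g t).getD g
  ρ := E.qInit

/-- Restriction of an empire given by raw data to its reachable part. -/
def restrictEmpire {Place Trans State Q : Type*} (q0 : Q) (δ0 : Q → Trans → Option Q)
    (law : Q → State → Prop) (terr : Q → Set (Set Place)) :
    EmpireData Place Trans State {q : Q // EmpReach q0 δ0 q} where
  qInit := ⟨q0, EmpReach.init⟩
  δ := restrictδ q0 δ0
  law := fun q => law q.val
  terr := fun q => terr q.val

/-- `m ∈ ⟦τ⟧`: `m` is derived by taking exactly one place from each region of `τ`. -/
def InTreaty {Place : Type*} (τ : Set (Set Place)) (m : Set Place) : Prop :=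
  ∃ f : Set Place → Place, (∀ r ∈ τ, f r ∈ r) ∧ m = {p | ∃ r ∈ τ, p = f r}

namespace PetriNet

variable {Place Trans Stmt State : Type*} (N : PetriNet Place Trans Stmt State)

/-- `m ▷t m'`: transition `t` is enabled in `m` and firing it yields `m'`. -/
def fires (m : Set Place) (t : Trans) (m' : Set Place) : Prop :=
  N.pre t ⊆ m ∧ m' = (m \ N.pre t) ∪ N.post t

/-- Firing sequences. -/
inductive FiringSeq : Set Place → List Trans → Set Place → Prop
  | nil (m : Set Place) : FiringSeq m [] m
  | cons {m m' m'' : Set Place} {t : Trans} {ts : List Trans} :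
      N.fires m t m' → FiringSeq m' ts m'' → FiringSeq m (t :: ts) m''

/-- A marking is reachable if some firing sequence from the initial marking ends in it. -/
def Reachable (m : Set Place) : Prop := ∃ ts, N.FiringSeq N.mInit ts m

/-- The Hoare triple `{φ} st {ψ}` holds. -/
def Hoare (φ : State → Prop) (st : Stmt) (ψ : State → Prop) : Prop :=
  ∀ s s', φ s → N.sem st s s' → ψ s'

/-- Semantics of a sequence of statements. -/
inductive SeqSem : List Stmt → State → State → Prop
  | nil (s : State) : SeqSem [] s s
  | cons {st : Stmt} {sts : List Stmt} {s s' s'' : State} :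
      N.sem st s s' → SeqSem sts s' s'' → SeqSem (st :: sts) s s''

/-- The Petri program is correct: for every firing sequence reaching a marking that
contains an error place, the Hoare triple `{⊤} λ(t1)...λ(tn) {⊥}` holds. -/
def Correct : Prop :=
  ∀ ts m, N.FiringSeq N.mInit ts m → (m ∩ N.err).Nonempty →
    ∀ s s', N.SeqSem (List.map N.label ts) s s' → False

/-- `p` and `t` are co-marked. -/
def coMarked (p : Place) (t : Trans) : Prop :=
  p ∉ N.pre t ∧ ∃ m, N.Reachable m ∧ p ∈ m ∧ N.pre t ⊆ m

/-- Two places are co-related. -/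
def coRelated (p p' : Place) : Prop :=
  p ≠ p' ∧ ∃ m, N.Reachable m ∧ p ∈ m ∧ p' ∈ m

/-- A region: a nonempty set of places that are pairwise not co-related. -/
def IsRegion (r : Set Place) : Prop :=
  r.Nonempty ∧ ∀ p1 ∈ r, ∀ p2 ∈ r, ¬ N.coRelated p1 p2

/-- A territory: a set of pairwise disjoint regions all of whose treaty members are
reachable markings. -/
def IsTerritory (τ : Set (Set Place)) : Prop :=
  (∀ r ∈ τ, N.IsRegion r) ∧
  (∀ r1 ∈ τ, ∀ r2 ∈ τ, r1 ≠ r2 → r1 ∩ r2 = ∅) ∧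
  (∀ m, InTreaty τ m → N.Reachable m)

/-- `t` is enabled in the territory `τ`: every predecessor place lies in a distinct
region of `τ`. -/
def terrEnabled (t : Trans) (τ : Set (Set Place)) : Prop :=
  ∃ f : Place → Set Place, (∀ p ∈ N.pre t, f p ∈ τ ∧ p ∈ f p) ∧
    ∀ p1 ∈ N.pre t, ∀ p2 ∈ N.pre t, p1 ≠ p2 → f p1 ≠ f p2

/-- `τ ▷t τ'`: the firing relation on territories. -/
def terrFires (τ : Set (Set Place)) (t : Trans) (τ' : Set (Set Place)) : Prop :=
  ∃ f f' : Place → Set Place,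
    (∀ p ∈ N.pre t, f p ∈ τ ∧ p ∈ f p) ∧
    (∀ p1 ∈ N.pre t, ∀ p2 ∈ N.pre t, p1 ≠ p2 → f p1 ≠ f p2) ∧
    (∀ p ∈ N.post t, N.IsRegion (f' p) ∧ p ∈ f' p) ∧
    (∀ p1 ∈ N.post t, ∀ p2 ∈ N.post t, p1 ≠ p2 → f' p1 ≠ f' p2) ∧
    τ' = (τ \ {r | ∃ p ∈ N.pre t, r = f p}) ∪ {r | ∃ p ∈ N.post t, r = f' p}

/-- The bystander regions of `t` in `τ`. -/
def bystanders (t : Trans) (τ : Set (Set Place)) : Set (Set Place) :=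
  {r ∈ τ | r ∩ N.pre t = ∅}

/-- The replaced territory `replace(t,τ)`. -/
def replaceT (t : Trans) (τ : Set (Set Place)) : Set (Set Place) :=
  N.bystanders t τ ∪ {r | ∃ p ∈ N.post t, r = {p}}

/-- `τ` is extendable with `t`. -/
def extendable (t : Trans) (τ : Set (Set Place)) : Prop :=
  N.terrEnabled t τ ∧ (∃ p, N.pre t = {p}) ∧ (∃ p', N.post t = {p'}) ∧
    ∀ r ∈ τ, (r ∩ N.pre t).Nonempty → ∀ p'' ∈ r, ∀ p' ∈ N.post t, ¬ N.coRelated p' p''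

/-- The extended territory `extend(t,τ)`: the (unique) region meeting `•t` is enlarged
by the successor place. -/
def extendT (t : Trans) (τ : Set (Set Place)) : Set (Set Place) :=
  N.bystanders t τ ∪ {r' | ∃ r ∈ τ, (r ∩ N.pre t).Nonempty ∧ r' = r ∪ N.post t}

/-- An invariant domain for `N`: a finite set `A` of formulas (modelled semantically)
containing `⊥` and `⊤`, and a post operator such that `{φ} λ(t) {post(φ,t)}` always holds. -/
structure InvDomain where
  A : Set (State → Prop)
  postF : (State → Prop) → Trans → (State → Prop)
  finA : A.Finite
  bot_mem : (fun _ => False) ∈ A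
  top_mem : (fun _ => True) ∈ A
  post_mem : ∀ φ ∈ A, ∀ t, postF φ t ∈ A
  post_hoare : ∀ φ ∈ A, ∀ t, N.Hoare φ (N.label t) (postF φ t)

/-- Reachable abstract configurations, generically over a type `Φ` of laws with a post
operator `postA` and top element `φtop`. -/
inductive AbsReachG {Φ : Type*} (postA : Φ → Trans → Φ) (φtop : Φ) : Set Place → Φ → Prop
  | init : AbsReachG postA φtop N.mInit φtop
  | step {m : Set Place} {φ : Φ} {t : Trans} {m' : Set Place} :
      AbsReachG postA φtop m φ → N.fires m t m' → AbsReachG postA φtop m' (postA φ t)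

/-- The invariant domain is safe: every reachable abstract configuration at a marking
containing an error place has law equivalent to `⊥`. -/
def SafeDomain (D : InvDomain N) : Prop :=
  ∀ m φ, N.AbsReachG D.postF (fun _ => True) m φ → (m ∩ N.err).Nonempty → ∀ s, ¬ φ s

/-- Validity of an Owicki-Gries annotation: initial, inductive, interference-free, safe. -/
structure OGValid {GS : Type*} (og : OG Place Trans State GS) : Prop where
  initialCond : ∀ p ∈ N.mInit, ∀ s, og.ω p s og.ρ
  inductiveCond : ∀ t s g s', (∀ p ∈ N.pre t, og.ω p s g) →
    N.sem (N.label t) s s' → ∀ p ∈ N.post t, og.ω p s' (og.γ t s' g)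
  interferenceFree : ∀ t p, N.coMarked p t → ∀ s g s',
    og.ω p s g → (∀ p' ∈ N.pre t, og.ω p' s g) →
    N.sem (N.label t) s s' → og.ω p s' (og.γ t s' g)
  safeCond : ∀ p ∈ N.err, ∀ s g, ¬ og.ω p s g

/-- The naive Owicki-Gries annotation `OG_naive(A,post)`: the ghost state is the set of
places `p` whose boolean ghost variable `g_p` is true; `ω(p)` is the disjunction over all
reachable markings `m` containing `p` of `χ(m) ∧ β(m)`. -/
def naiveOG (D : InvDomain N) : OG Place Trans State (Set Place) where
  ω := fun p s g => ∃ m, N.Reachable m ∧ p ∈ m ∧ g = m ∧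
    ∃ φ, N.AbsReachG D.postF (fun _ => True) m φ ∧ φ s
  γ := fun t _ g => (g \ (N.pre t \ N.post t)) ∪ (N.post t \ N.pre t)
  ρ := N.mInit

/-- Validity of an empire. -/
structure ValidEmpire {Q : Type*} (E : EmpireData Place Trans State Q) : Prop where
  terrOK : ∀ q, N.IsTerritory (E.terr q)
  initialLaw : ∀ s, E.law E.qInit s
  initialTerr : InTreaty (E.terr E.qInit) N.mInit
  inductiveLaw : ∀ q t, N.terrEnabled t (E.terr q) →
    (∃ q', E.δ q t = some q' ∧ N.Hoare (E.law q) (N.label t) (E.law q')) ∨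
      N.Hoare (E.law q) (N.label t) (fun _ => False)
  inductiveTerr : ∀ q t q', E.δ q t = some q' → N.terrFires (E.terr q) t (E.terr q')
  safeCond : ∀ q, (∃ r ∈ E.terr q, (r ∩ N.err).Nonempty) → ∀ s, ¬ E.law q s

/-- The initial territory `τ_init = {{p} | p ∈ m_init}`. -/
def tauInit : Set (Set Place) := {r | ∃ p ∈ N.mInit, r = {p}}

/-- `SaturateG postA φ rb τ τ'` means `τ' ∈ saturate(φ, rb, τ)` (saturated successors). -/
inductive SaturateG {Φ : Type*} (postA : Φ → Trans → Φ) (φ : Φ) (rb : Set (Set Place)) :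
    Set (Set Place) → Set (Set Place) → Prop
  | base {τ : Set (Set Place)} :
      (¬ ∃ t, N.extendable t τ ∧ ¬ N.terrFires τ t τ ∧ postA φ t = φ ∧
        rb ⊆ N.bystanders t τ) →
      SaturateG postA φ rb τ τ
  | step {τ : Set (Set Place)} {t : Trans} {τ' : Set (Set Place)} :
      N.extendable t τ → ¬ N.terrFires τ t τ → postA φ t = φ →
      rb ⊆ N.bystanders t τ → SaturateG postA φ rb (N.extendT t τ) τ' →
      SaturateG postA φ rb τ τ'

/-- `(q0, δ0)` is the data of a saturated empire (before restriction to the reachable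
part), generically over a type `Φ` of laws with post operator `postA`, interpretation
`interp` and top element `φtop`. -/
structure IsSaturatedG {Φ : Type*} (postA : Φ → Trans → Φ) (interp : Φ → State → Prop)
    (φtop : Φ) (q0 : Set (Set Place) × Φ)
    (δ0 : Set (Set Place) × Φ → Trans → Option (Set (Set Place) × Φ)) : Prop where
  initCond : ∃ τ, N.SaturateG postA φtop ∅ N.tauInit τ ∧ q0 = (τ, φtop)
  undefCond : ∀ τ φ t, (¬ N.terrEnabled t τ ∨ ∀ s, ¬ interp (postA φ t) s) →
    δ0 (τ, φ) t = none
  selfCond : ∀ τ φ t, N.terrEnabled t τ → (∃ s, interp (postA φ t) s) →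
    N.terrFires τ t τ → postA φ t = φ → δ0 (τ, φ) t = some (τ, φ)
  stepCond : ∀ τ φ t, N.terrEnabled t τ → (∃ s, interp (postA φ t) s) →
    ¬ (N.terrFires τ t τ ∧ postA φ t = φ) →
    ∃ τ', N.SaturateG postA (postA φ t) (N.bystanders t τ) (N.replaceT t τ) τ' ∧
      δ0 (τ, φ) t = some (τ', postA φ t)

open Classical in
/-- The transition function of the naive empire. -/
noncomputable def naiveδ (D : InvDomain N) (q : Set (Set Place) × (State → Prop))
    (t : Trans) : Option (Set (Set Place) × (State → Prop)) :=
  if N.terrEnabled t q.1 ∧ ∃ s, D.postF q.2 t s then some (N.replaceT t q.1, D.postF q.2 t)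
  else none

/-- The naive empire `E_naive(A,post)`: the reachable part of the empire whose states are
pairs of territories and laws, with initial state `⟨τ_init, ⊤⟩`. -/
noncomputable def naiveEmpire (D : InvDomain N) :
    EmpireData Place Trans State
      {q : Set (Set Place) × (State → Prop) //
        EmpReach (N.tauInit, fun _ => True) (N.naiveδ D) q} :=
  restrictEmpire (N.tauInit, fun _ => True) (N.naiveδ D) Prod.snd Prod.fst

open Classical in
/-- The product post operator of a family of invariant domains, acting on vectors of
component formulas (the vector `φv` represents the conjunction `⋀_i φv i`). -/
noncomputable def prodPost {n : ℕ} (Ds : Fin n → InvDomain N)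
    (φv : Fin n → State → Prop) (t : Trans) : Fin n → State → Prop :=
  if ∀ i, ∃ s, (Ds i).postF (φv i) t s then fun i => (Ds i).postF (φv i) t
  else fun _ _ => False

/-- Safety of the product invariant domain. -/
def prodSafe {n : ℕ} (Ds : Fin n → InvDomain N) : Prop :=
  ∀ m φv, N.AbsReachG (N.prodPost Ds) (fun _ _ => True) m φv →
    (m ∩ N.err).Nonempty → ∀ s, ¬ ∀ i, φv i s

/-- A focus on a saturated empire (given by raw data `(q0, δ0)` over vector laws). -/
structure IsFocus {n : ℕ} (Ds : Fin n → InvDomain N)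
    (q0 : Set (Set Place) × (Fin n → State → Prop))
    (δ0 : Set (Set Place) × (Fin n → State → Prop) → Trans →
      Option (Set (Set Place) × (Fin n → State → Prop)))
    (ℓ : Set (Set Place) × (Fin n → State → Prop) → Set Place → Set (Fin n)) :
    Prop where
  safeCond : ∀ q, EmpReach q0 δ0 q → ∀ t, N.terrEnabled t q.1 → δ0 q t = none →
    ∃ r ∈ q.1, ∃ i, (r ∩ N.pre t).Nonempty ∧ (∀ s, ¬ (Ds i).postF (q.2 i) t s) ∧ i ∈ ℓ q r
  inductiveEdge : ∀ q q' t, EmpReach q0 δ0 q → δ0 q t = some q' →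
    ∀ r' ∈ q'.1, (r' ∩ N.post t).Nonempty → ∀ i ∈ ℓ q' r',
      ∃ r ∈ q.1, (r ∩ N.pre t).Nonempty ∧ i ∈ ℓ q r
  bystandersCond : ∀ q q' t, EmpReach q0 δ0 q → δ0 q t = some q' →
    ∀ r ∈ N.bystanders t q.1, ∀ i ∈ ℓ q' r, i ∈ ℓ q r

end PetriNet

/-- A saturated empire (over scalar laws): the reachable part of the data `(q0, δ0)`. -/
def saturatedEmpire {Place Trans State : Type*}
    (q0 : Set (Set Place) × (State → Prop))
    (δ0 : Set (Set Place) × (State → Prop) → Trans →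
      Option (Set (Set Place) × (State → Prop))) :
    EmpireData Place Trans State {q // EmpReach q0 δ0 q} :=
  restrictEmpire q0 δ0 Prod.snd Prod.fst

/-- The focused law `law_p(q) = ⋀ {φ_i | ∃ r ∈ terr(q). i ∈ ℓ(q,r) ∧ p ∈ r}`. -/
def lawP {Place State : Type*} {n : ℕ}
    (ℓ : Set (Set Place) × (Fin n → State → Prop) → Set Place → Set (Fin n))
    (q : Set (Set Place) × (Fin n → State → Prop)) (p : Place) : State → Prop :=
  fun s => ∀ i, (∃ r ∈ q.1, i ∈ ℓ q r ∧ p ∈ r) → q.2 i s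

/-- `law_X(q) = ⋀_{p ∈ X} law_p(q)`. -/
def lawX {Place State : Type*} {n : ℕ}
    (ℓ : Set (Set Place) × (Fin n → State → Prop) → Set Place → Set (Fin n))
    (q : Set (Set Place) × (Fin n → State → Prop)) (X : Set Place) : State → Prop :=
  fun s => ∀ p ∈ X, lawP ℓ q p s

/-- The focused imperial Owicki-Gries annotation `OG_{E,ℓ}` of the saturated empire
given by `(q0, δ0)` (restricted to its reachable part) with focus `ℓ`:
`ω(p) = ⋁_{q ∈ Q_p} (g = q ∧ law_p(q))`. -/
def focusedOG {Place Trans State : Type*} {n : ℕ}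
    (q0 : Set (Set Place) × (Fin n → State → Prop))
    (δ0 : Set (Set Place) × (Fin n → State → Prop) → Trans →
      Option (Set (Set Place) × (Fin n → State → Prop)))
    (ℓ : Set (Set Place) × (Fin n → State → Prop) → Set Place → Set (Fin n)) :
    OG Place Trans State {q // EmpReach q0 δ0 q} where
  ω := fun p s g => ∃ q : {q // EmpReach q0 δ0 q},
    (∃ r ∈ q.val.1, p ∈ r) ∧ g = q ∧ lawP ℓ q.val p s
  γ := fun t _ g => (restrictδ q0 δ0 g t).getD g
  ρ := ⟨q0, EmpReach.init⟩

end GhostsOfEmpires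
open GhostsOfEmpires in
private lemma statement0_aux {Place Trans Stmt State : Type*}
    (N : PetriNet Place Trans Stmt State) (D : N.InvDomain) :
    ∀ ts m m' (φ : State → Prop), N.FiringSeq m ts m' →
      N.AbsReachG D.postF (fun _ => True) m φ → φ ∈ D.A →
      ∀ s s', φ s → N.SeqSem (List.map N.label ts) s s' →
      ∃ φ', N.AbsReachG D.postF (fun _ => True) m' φ' ∧ φ' ∈ D.A ∧ φ' s' := by
  intro ts
  induction ts with
  | nil =>
    intro m m' φ hfs habs hA s s' hφ hsem
    cases hfs
    cases hsem
    exact ⟨φ, habs, hA, hφ⟩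
  | cons t ts ih =>
    intro m m' φ hfs habs hA s s' hφ hsem
    cases hfs with
    | cons hf hrest =>
      cases hsem with
      | cons hst hsts =>
        exact ih _ _ _ hrest (habs.step hf) (D.post_mem φ hA t)
          _ _ (D.post_hoare φ hA t s _ hφ hst) hsts

open GhostsOfEmpires in
/-- If there exists a safe invariant domain for the Petri program `N`,
then `N` is correct. -/
theorem statement0 {Place Trans Stmt State : Type*}
    [Fintype Place] [Fintype Trans] [Fintype Stmt]
    (N : PetriNet Place Trans Stmt State)
    (henabled : ∀ t : Trans, ∃ m, N.Reachable m ∧ N.pre t ⊆ m)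
    (hsafe : ∃ D : N.InvDomain, N.SafeDomain D) :
    N.Correct := by
  obtain ⟨D, hD⟩ := hsafe
  intro ts m hfs herr s s' hsem
  obtain ⟨φ', habs, _, hφ'⟩ := statement0_aux N D ts N.mInit m (fun _ => True) hfs
    (PetriNet.AbsReachG.init) D.top_mem s s' trivial hsem
  exact hD m φ' habs herr s' hφ'
end

section
/- If there exists a valid empire for the Petri program P, then P is correct. -/
/-!
Common semantic framework for "The Ghosts of Empires":
Petri programs, Hoare triples, invariant domains, Owicki-Gries annotations,
territories, empires, saturated empires, focus.
-/

namespace GhostsOfEmpires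

namespace PetriNet

variable {Place Trans Stmt State : Type*} {N : PetriNet Place Trans Stmt State}

lemma FiringSeq.append {m0 m m' : Set Place} {ts : List Trans} {t : Trans}
    (h : N.FiringSeq m0 ts m) (h' : N.fires m t m') :
    N.FiringSeq m0 (ts ++ [t]) m' := by
  induction h with
  | nil m => exact FiringSeq.cons h' (FiringSeq.nil _)
  | cons hf hs ih => exact FiringSeq.cons hf (ih h')

open Classical in
lemma step_lemma {Q : Type*} (E : EmpireData Place Trans State Q)
    (hV : N.ValidEmpire E)
    {q : Q} {m m' : Set Place} {t : Trans}
    (hm : InTreaty (E.terr q) m) (hreach' : N.Reachable m')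
    (hf : N.fires m t m') {s s1 : State}
    (hlaw : E.law q s) (hsem : N.sem (N.label t) s s1) :
    ∃ q', InTreaty (E.terr q') m' ∧ E.law q' s1 := by
  obtain ⟨F, hF1, hF2⟩ := hm
  have hdisj := (hV.terrOK q).2.1
  have hmF : ∀ p ∈ m, ∃ r ∈ E.terr q, p = F r := by
    intro p hp; rw [hF2] at hp; exact hp
  -- enabledness of t in the territory of q
  have hEn : N.terrEnabled t (E.terr q) := by
    refine ⟨fun p => if h : ∃ r ∈ E.terr q, p = F r then h.choose else ∅, ?_, ?_⟩
    · intro p hp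
      have h := hmF p (hf.1 hp)
      dsimp only
      rw [dif_pos h]
      refine ⟨h.choose_spec.1, ?_⟩
      have hx := hF1 _ h.choose_spec.1
      rwa [← h.choose_spec.2] at hx
    · intro p1 hp1 p2 hp2 hne heq
      have h1 := hmF p1 (hf.1 hp1); have h2 := hmF p2 (hf.1 hp2)
      dsimp only at heq
      rw [dif_pos h1, dif_pos h2] at heq
      refine hne (h1.choose_spec.2.trans ?_)
      rw [heq]; exact h2.choose_spec.2.symm
  rcases hV.inductiveLaw q t hEn with ⟨q', hδ, hH⟩ | hH
  · have hlaw' : E.law q' s1 := hH s s1 hlaw hsem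
    obtain ⟨g2, f', hg2, hg2inj, hf'r, hf'inj, hτ'⟩ := hV.inductiveTerr q t q' hδ
    -- every pre-place p satisfies p = F (g2 p)
    have hkey : ∀ p ∈ N.pre t, p = F (g2 p) := by
      intro p hp
      obtain ⟨r, hr, hpr⟩ := hmF p (hf.1 hp)
      have hpin : p ∈ r := by rw [hpr]; exact hF1 r hr
      have hreq : r = g2 p := by
        by_contra hne
        have hd := hdisj r hr (g2 p) (hg2 p hp).1 hne
        have : p ∈ r ∩ g2 p := ⟨hpin, (hg2 p hp).2⟩
        rw [hd] at this; exact this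
      rw [← hreq]; exact hpr
    classical
    refine ⟨q', ?_, hlaw'⟩
    rw [hτ']
    refine ⟨fun r => if h : ∃ p ∈ N.post t, r = f' p then h.choose else F r, ?_, ?_⟩
    · intro r hr
      dsimp only
      by_cases h : ∃ p ∈ N.post t, r = f' p
      · rw [dif_pos h]
        have hx := (hf'r _ h.choose_spec.1).2
        rwa [← h.choose_spec.2] at hx
      · rw [dif_neg h]
        rcases hr with hr | hr
        · exact hF1 r hr.1
        · exact absurd hr h
    · ext p
      constructor
      · -- p ∈ m' → p comes from some region
        intro hp
        have hp' : p ∈ (m \ N.pre t) ∪ N.post t := by rw [← hf.2]; exact hp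
        rcases hp' with ⟨hpm, hppre⟩ | hppost
        · -- p was untouched
          obtain ⟨r, hr, hpr⟩ := hmF p hpm
          have hpin : p ∈ r := by rw [hpr]; exact hF1 r hr
          have hrnot : ¬ ∃ p0 ∈ N.pre t, r = g2 p0 := by
            rintro ⟨p0, hp0, rfl⟩
            have : p0 = F (g2 p0) := hkey p0 hp0
            rw [← this] at hpr
            exact hppre (hpr ▸ hp0)
          refine ⟨r, Or.inl ⟨hr, hrnot⟩, ?_⟩
          dsimp only
          by_cases h : ∃ p'' ∈ N.post t, r = f' p''
          · rw [dif_pos h]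
            -- the chosen post-place must equal p, else co-related in region r
            have hc := h.choose_spec
            by_contra hne
            have hpc : h.choose ∈ r := by
              have hx := (hf'r _ hc.1).2
              rwa [← hc.2] at hx
            have hreg : N.IsRegion r := by rw [hc.2]; exact (hf'r _ hc.1).1
            have hpm' : p ∈ m' := by
              rw [hf.2]; exact Or.inl ⟨hpm, hppre⟩
            have hcm' : h.choose ∈ m' := by
              rw [hf.2]; exact Or.inr hc.1
            exact hreg.2 p hpin h.choose hpc ⟨hne, m', hreach', hpm', hcm'⟩
          · rw [dif_neg h]; exact hpr
        · -- p is a post-place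
          have h : ∃ p'' ∈ N.post t, f' p = f' p'' := ⟨p, hppost, rfl⟩
          refine ⟨f' p, Or.inr ⟨p, hppost, rfl⟩, ?_⟩
          dsimp only
          rw [dif_pos h]
          by_contra hne
          exact hf'inj p hppost h.choose h.choose_spec.1
            (fun e => hne (e ▸ rfl)) h.choose_spec.2
      · rintro ⟨r, hr, hpr⟩
        dsimp only at hpr
        rw [hf.2]
        by_cases h : ∃ p'' ∈ N.post t, r = f' p''
        · rw [dif_pos h] at hpr
          exact Or.inr (hpr ▸ h.choose_spec.1)
        · rw [dif_neg h] at hpr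
          rcases hr with ⟨hr, hrS⟩ | hr
          · have hFm : F r ∈ m := by rw [hF2]; exact ⟨r, hr, rfl⟩
            have hFnotpre : F r ∉ N.pre t := by
              intro hpre
              apply hrS
              refine ⟨F r, hpre, ?_⟩
              by_contra hne
              have hd := hdisj r hr (g2 (F r)) (hg2 _ hpre).1 hne
              have : F r ∈ r ∩ g2 (F r) := ⟨hF1 r hr, (hg2 _ hpre).2⟩
              rw [hd] at this; exact this
            exact Or.inl ⟨hpr ▸ hFm, hpr ▸ hFnotpre⟩
          · exact absurd hr h
  · exact absurd (hH s s1 hlaw hsem) (fun h => h)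

lemma run_lemma {Q : Type*} (E : EmpireData Place Trans State Q)
    (hV : N.ValidEmpire E) :
    ∀ {m0 : Set Place} {ts : List Trans} {m : Set Place}, N.FiringSeq m0 ts m →
      N.Reachable m0 → ∀ {s s' : State}, N.SeqSem (ts.map N.label) s s' →
      ∀ q, InTreaty (E.terr q) m0 → E.law q s →
      ∃ q', InTreaty (E.terr q') m ∧ E.law q' s' := by
  intro m0 ts m hfs
  induction hfs with
  | nil m =>
    intro _ s s' hsem q h1 h2
    cases hsem
    exact ⟨q, h1, h2⟩
  | cons hf hrest ih =>
    intro hr0 s s' hsem q h1 h2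
    rw [List.map_cons] at hsem
    cases hsem with
    | cons hst hrest' =>
      have hr1 : N.Reachable _ := hr0.elim fun ts0 h0 => ⟨ts0 ++ [_], h0.append hf⟩
      obtain ⟨q', hq'1, hq'2⟩ := step_lemma E hV h1 hr1 hf h2 hst
      exact ih hr1 hrest' q' hq'1 hq'2

end PetriNet

end GhostsOfEmpires
open GhostsOfEmpires in
/-- If there exists a valid empire for the Petri program `N`, then `N`
is correct. -/
theorem statement4 {Place Trans Stmt State : Type*}
    [Fintype Place] [Fintype Trans] [Fintype Stmt]
    (N : PetriNet Place Trans Stmt State)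
    (henabled : ∀ t : Trans, ∃ m, N.Reachable m ∧ N.pre t ⊆ m)
    (h : ∃ (Q : Type) (_ : Fintype Q) (E : EmpireData Place Trans State Q),
      N.ValidEmpire E) :
    N.Correct := by
  obtain ⟨Q, _, E, hV⟩ := h
  intro ts m hfs herr s s' hsem
  obtain ⟨q', hmem, hlaw⟩ := N.run_lemma E hV hfs ⟨[], PetriNet.FiringSeq.nil _⟩
    hsem E.qInit hV.initialTerr (hV.initialLaw s)
  obtain ⟨e, hem, hee⟩ := herr
  obtain ⟨F, hF1, hF2⟩ := hmem
  rw [hF2] at hem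
  obtain ⟨r, hr, hre⟩ := hem
  exact hV.safeCond q' ⟨r, hr, e, hre ▸ hF1 r hr, hee⟩ s' hlaw
end

section
/- Let E be a valid empire with imperial Owicki-Gries annotation OG_E, let q, q' ∈ Q and let t be a transition with δ(q,t) = q'. Then the Hoare triple {g = q ∧ law(q)} λ(t);γ(t) {g = q' ∧ law(q')} holds. -/
open GhostsOfEmpires in
/-- Let `E` be a valid empire with imperial Owicki-Gries annotation
`OG_E`, let `q, q' ∈ Q` and `t` a transition with `δ(q,t) = q'`. Then the Hoare
triple `{g = q ∧ law(q)} λ(t);γ(t) {g = q' ∧ law(q')}` holds. -/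
theorem statement6 {Place Trans Stmt State Q : Type*}
    [Fintype Place] [Fintype Trans] [Fintype Stmt] [Fintype Q]
    (N : PetriNet Place Trans Stmt State)
    (E : EmpireData Place Trans State Q) (hE : N.ValidEmpire E)
    (q q' : Q) (t : Trans) (hδ : E.δ q t = some q') :
    ∀ s g s', (g = q ∧ E.law q s) → N.sem (N.label t) s s' →
      ((imperialOG E).γ t s' g = q' ∧ E.law q' s') := by
  rintro s g s' ⟨rfl, hlaw⟩ hsem
  constructor
  · simp [imperialOG, hδ]
  · have hfires := hE.inductiveTerr g t q' hδ
    obtain ⟨f, f', hf, hfinj, _, _, _⟩ := hfires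
    have hen : N.terrEnabled t (E.terr g) := ⟨f, hf, hfinj⟩
    rcases hE.inductiveLaw g t hen with ⟨q'', hq'', hH⟩ | hH
    · rw [hδ] at hq''; obtain rfl : q' = q'' := by injection hq''
      exact hH s s' hlaw hsem
    · exact absurd (hH s s' hlaw hsem) (fun h => h)
end

section
/- Let E be a valid empire with imperial Owicki-Gries annotation OG_E = (G, ω, γ, ρ). Let P̂ be a nonempty subset of a reachable marking, and let t be a transition with •t ⊆ P̂. Then the Hoare triple {⋀_{p∈P̂} ω(p)} λ(t);γ(t) {⋀_{p∈(P̂\•t)∪t•} ω(p)} holds. -/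
open GhostsOfEmpires in
/-- Let `E` be a valid empire with imperial Owicki-Gries annotation
`OG_E`. Let `P̂` be a nonempty subset of a reachable marking, and `t` a transition
with `•t ⊆ P̂`. Then `{⋀_{p∈P̂} ω(p)} λ(t);γ(t) {⋀_{p∈(P̂\•t)∪t•} ω(p)}` holds. -/
theorem statement7 {Place Trans Stmt State Q : Type*}
    [Fintype Place] [Fintype Trans] [Fintype Stmt] [Fintype Q]
    (N : PetriNet Place Trans Stmt State)
    (E : EmpireData Place Trans State Q) (hE : N.ValidEmpire E)
    (Phat : Set Place) (hne : Phat.Nonempty)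
    (hsub : ∃ m, N.Reachable m ∧ Phat ⊆ m)
    (t : Trans) (hpre : N.pre t ⊆ Phat) :
    ∀ s g s', (∀ p ∈ Phat, (imperialOG E).ω p s g) → N.sem (N.label t) s s' →
      ∀ p ∈ (Phat \ N.pre t) ∪ N.post t,
        (imperialOG E).ω p s' ((imperialOG E).γ t s' g) := by
  classical
  intro s g s' hω hsem p hp
  obtain ⟨m, hmR, hPm⟩ := hsub
  have hreg : ∀ p ∈ Phat, ∃ r ∈ E.terr g, p ∈ r := by
    intro p hp
    obtain ⟨q, hq, rfl, _⟩ := hω p hp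
    exact hq
  obtain ⟨p0, hp0⟩ := hne
  obtain ⟨q0, hq0, heq0, hlaw⟩ := hω p0 hp0
  have hlaw : E.law g s := heq0 ▸ hlaw
  -- t is enabled in terr g
  have hen : N.terrEnabled t (E.terr g) := by
    refine ⟨fun p => if h : p ∈ N.pre t then (hreg p (hpre h)).choose else ∅, ?_, ?_⟩
    · intro p hpt
      simp only [dif_pos hpt]
      exact (hreg p (hpre hpt)).choose_spec
    · intro p1 h1 p2 h2 hne12 hfe
      simp only [dif_pos h1, dif_pos h2] at hfe
      obtain ⟨hr1, hp1r⟩ := (hreg p1 (hpre h1)).choose_spec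
      obtain ⟨hr2, hp2r⟩ := (hreg p2 (hpre h2)).choose_spec
      have hco : N.coRelated p1 p2 :=
        ⟨hne12, m, hmR, hPm (hpre h1), hPm (hpre h2)⟩
      exact ((hE.terrOK g).1 _ hr1).2 p1 hp1r p2 (hfe ▸ hp2r) hco
  rcases hE.inductiveLaw g t hen with ⟨q', hδ, hH⟩ | hbot
  · have hγ : (imperialOG E).γ t s' g = q' := by
      simp [imperialOG, hδ]
    have hlaw' : E.law q' s' := hH s s' hlaw hsem
    obtain ⟨f, f', hf, hfdist, hf', hf'dist, hterr'⟩ := hE.inductiveTerr g t q' hδ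
    rcases hp with ⟨hpPhat, hpnot⟩ | hppost
    · obtain ⟨r, hr, hpr⟩ := hreg p hpPhat
      refine ⟨q', ⟨r, ?_, hpr⟩, hγ, hlaw'⟩
      rw [hterr']
      left
      refine ⟨hr, ?_⟩
      rintro ⟨pp, hppt, rfl⟩
      have hppr : pp ∈ f pp := (hf pp hppt).2
      have hne' : pp ≠ p := fun h => hpnot (h ▸ hppt)
      have hco : N.coRelated pp p :=
        ⟨hne', m, hmR, hPm (hpre hppt), hPm hpPhat⟩
      exact ((hE.terrOK g).1 _ hr).2 pp hppr p hpr hco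
    · refine ⟨q', ⟨f' p, ?_, (hf' p hppost).2⟩, hγ, hlaw'⟩
      rw [hterr']
      exact Or.inr ⟨p, hppost, rfl⟩
  · exact absurd (hbot s s' hlaw hsem) (fun h => h)
end

section
/- If a territory τ is extendable with a transition t, then the extended territory extend(t,τ) is a territory, and τ ▷t extend(t,τ) holds. -/
/-!
Since `•t = {p}` and `t• = {p'}`, the only region that changes is the region `r ∋ p`, which
becomes `r ∪ {p'}`. A marking of the new treaty either picks a place of `r`, and then it already
lies in `⟦τ⟧`, or it picks `p'`, and then it is obtained by firing `t` from the marking of `⟦τ⟧`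
that picks `p` instead. Disjointness survives because a place of another region of `τ` is
co-related with `p`, which `p'` is not.
-/

namespace GhostsOfEmpires

theorem image_update_of_mem {α β : Type*} [DecidableEq α] {f : α → β} {s : Set α} {a : α}
    (ha : a ∈ s) (b : β) : Function.update f a b '' s = insert b (f '' (s \ {a})) := by
  conv_lhs => rw [← Set.insert_sdiff_self_of_mem ha]
  rw [Set.image_insert_eq, Function.update_self]
  exact congrArg _ (Set.image_congr fun x hx => Function.update_of_ne hx.2 _ _)

theorem setOf_exists_eq_apply {α β : Type*} (f : α → β) (s : Set α) :
    {b | ∃ a ∈ s, b = f a} = f '' s := by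
  ext; simp [eq_comm]

theorem update_mem_of_forall_mem {Place : Type*} [DecidableEq (Set Place)]
    {τ : Set (Set Place)} {f : Set Place → Place} {r₀ : Set Place} {c : Place}
    (hf : ∀ r ∈ τ \ {r₀}, f r ∈ r) (hc : c ∈ r₀) :
    ∀ r ∈ τ, Function.update f r₀ c r ∈ r := by
  intro r hr
  rcases eq_or_ne r r₀ with rfl | hne
  · simpa using hc
  · simpa [Function.update_of_ne hne] using hf r ⟨hr, hne⟩

namespace PetriNet

variable {Place Trans Stmt State : Type*} {N : PetriNet Place Trans Stmt State}

theorem coRelated.symm {p q : Place} (h : N.coRelated p q) : N.coRelated q p :=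
  let ⟨hne, m, hm, hp, hq⟩ := h
  ⟨hne.symm, m, hm, hq, hp⟩

theorem FiringSeq.append_fires {m m' m'' : Set Place} {ts : List Trans} {t : Trans}
    (h : N.FiringSeq m ts m') (h' : N.fires m' t m'') : N.FiringSeq m (ts ++ [t]) m'' := by
  induction h with
  | nil m => exact .cons h' (.nil _)
  | cons hf _ ih => exact .cons hf (ih h')

theorem Reachable.fires {m m' : Set Place} {t : Trans} (h : N.Reachable m)
    (h' : N.fires m t m') : N.Reachable m' :=
  let ⟨ts, hts⟩ := h
  ⟨ts ++ [t], hts.append_fires h'⟩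

theorem fires_insert {t : Trans} {p p' : Place} {M : Set Place} (hpre : N.pre t = {p})
    (hpost : N.post t = {p'}) (hp : p ∉ M) : N.fires (insert p M) t (insert p' M) := by
  refine ⟨by simp [hpre], ?_⟩
  rw [hpre, hpost, Set.insert_sdiff_self_of_notMem hp, Set.union_singleton]

theorem IsRegion.insert {r : Set Place} {p : Place} (hr : N.IsRegion r)
    (hp : ∀ q ∈ r, ¬ N.coRelated p q) : N.IsRegion (insert p r) := by
  refine ⟨Set.insert_nonempty p r, ?_⟩
  rintro q₁ (rfl | h₁) q₂ (rfl | h₂) hco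
  · exact hco.1 rfl
  · exact hp q₂ h₂ hco
  · exact hp q₁ h₁ hco.symm
  · exact hr.2 q₁ h₁ q₂ h₂ hco

theorem terrFires_insert_sdiff {τ : Set (Set Place)} {t : Trans} {p p' : Place}
    {r r' : Set Place} (hpre : N.pre t = {p}) (hpost : N.post t = {p'}) (hr : r ∈ τ)
    (hp : p ∈ r) (hr' : N.IsRegion r') (hp' : p' ∈ r') :
    N.terrFires τ t (insert r' (τ \ {r})) := by
  refine ⟨fun _ => r, fun _ => r', ?_, ?_, ?_, ?_, ?_⟩
  · simp [hpre, hr, hp]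
  · simp [hpre]
  · simp [hpost, hr', hp']
  · simp [hpost]
  · simp [hpre, hpost, Set.union_singleton]

namespace IsTerritory

variable {τ : Set (Set Place)} (hτ : N.IsTerritory τ)
include hτ

theorem reachable_image {f : Set Place → Place} (hf : ∀ r ∈ τ, f r ∈ r) :
    N.Reachable (f '' τ) :=
  hτ.2.2 _ ⟨f, hf, (setOf_exists_eq_apply f τ).symm⟩

theorem eq_of_mem_of_mem {r₁ r₂ : Set Place} {q : Place} (hr₁ : r₁ ∈ τ) (hr₂ : r₂ ∈ τ)
    (h₁ : q ∈ r₁) (h₂ : q ∈ r₂) : r₁ = r₂ := by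
  by_contra hne
  exact Set.notMem_empty q (hτ.2.1 r₁ hr₁ r₂ hr₂ hne ▸ ⟨h₁, h₂⟩)

theorem coRelated_of_mem {r₁ r₂ : Set Place} {q₁ q₂ : Place} (hr₁ : r₁ ∈ τ) (hr₂ : r₂ ∈ τ)
    (hne : r₁ ≠ r₂) (h₁ : q₁ ∈ r₁) (h₂ : q₂ ∈ r₂) : N.coRelated q₁ q₂ := by
  classical
  have : Nonempty Place := ⟨q₁⟩
  have hc : ∀ r ∈ τ, Classical.epsilon (· ∈ r) ∈ r :=
    fun r hr => Classical.epsilon_spec (hτ.1 r hr).1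
  set g := Function.update (Function.update (fun r => Classical.epsilon (· ∈ r)) r₂ q₂) r₁ q₁
  have hg : ∀ r ∈ τ, g r ∈ r :=
    update_mem_of_forall_mem (fun r hr => update_mem_of_forall_mem (fun r hr => hc r hr.1) h₂
      r hr.1) h₁
  refine ⟨fun h => hne (hτ.eq_of_mem_of_mem hr₁ hr₂ h₁ (h ▸ h₂)), g '' τ,
    hτ.reachable_image hg, ⟨r₁, hr₁, by simp [g]⟩, ⟨r₂, hr₂, by simp [g, hne.symm]⟩⟩

theorem extendT_eq {t : Trans} {p : Place} {r : Set Place} (hpre : N.pre t = {p})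
    (hr : r ∈ τ) (hp : p ∈ r) : N.extendT t τ = insert (r ∪ N.post t) (τ \ {r}) := by
  have hmem : ∀ r' ∈ τ, p ∈ r' ↔ r' = r :=
    fun r' hr' => ⟨fun h => hτ.eq_of_mem_of_mem hr' hr h hp, fun h => h ▸ hp⟩
  ext r'
  have hextended : (∃ r₁ ∈ τ, p ∈ r₁ ∧ r' = r₁ ∪ N.post t) ↔ r' = r ∪ N.post t :=
    ⟨fun ⟨r₁, hr₁, h₁, e⟩ => (hmem r₁ hr₁).1 h₁ ▸ e, fun e => ⟨r, hr, hp, e⟩⟩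
  simp only [extendT, bystanders, hpre, Set.inter_singleton_eq_empty,
    Set.inter_singleton_nonempty, Set.mem_union, Set.mem_ofPred_eq, hextended,
    Set.mem_insert_iff, Set.mem_sdiff, Set.mem_singleton_iff]
  exact or_comm.trans (or_congr_right (and_congr_right fun h => not_congr (hmem r' h)))

theorem insert_insert_sdiff {t : Trans} {p p' : Place} {r : Set Place} (hr : r ∈ τ)
    (hp : p ∈ r) (hpre : N.pre t = {p}) (hpost : N.post t = {p'})
    (hp' : ∀ q ∈ r, ¬ N.coRelated p' q) : N.IsTerritory (insert (insert p' r) (τ \ {r})) := by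
  have hp'_notMem : ∀ r₁ ∈ τ \ {r}, p' ∉ r₁ :=
    fun r₁ ⟨hr₁, hne⟩ h => hp' p hp (hτ.coRelated_of_mem hr₁ hr hne h hp)
  have hp_notMem : ∀ r₁ ∈ τ \ {r}, p ∉ r₁ :=
    fun r₁ ⟨hr₁, hne⟩ h => hne (hτ.eq_of_mem_of_mem hr₁ hr h hp)
  have hdisj : ∀ r₁ ∈ τ \ {r}, insert p' r ∩ r₁ = ∅ := fun r₁ hr₁ => by
    rw [Set.insert_inter_of_notMem (hp'_notMem r₁ hr₁)]
    exact hτ.2.1 r hr r₁ hr₁.1 (Ne.symm hr₁.2)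
  refine ⟨?_, ?_, ?_⟩
  · rintro r₁ (rfl | ⟨hr₁, -⟩)
    exacts [(hτ.1 r hr).insert hp', hτ.1 r₁ hr₁]
  · rintro r₁ (rfl | hr₁) r₂ (rfl | hr₂) hne
    · exact absurd rfl hne
    · exact hdisj r₂ hr₂
    · rw [Set.inter_comm]; exact hdisj r₁ hr₁
    · exact hτ.2.1 r₁ hr₁.1 r₂ hr₂.1 hne
  · classical
    rintro m ⟨f, hf, rfl⟩
    have hf' : ∀ r₁ ∈ τ \ {r}, f r₁ ∈ r₁ := fun r₁ hr₁ => hf r₁ (.inr hr₁)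
    rw [setOf_exists_eq_apply, Set.image_insert_eq]
    rcases hf _ (Set.mem_insert _ _) with hc | hc
    · have hp_notMem_image : p ∉ f '' (τ \ {r}) := by
        rintro ⟨r₁, hr₁, h⟩
        exact hp_notMem r₁ hr₁ (h ▸ hf' r₁ hr₁)
      have hreach := hτ.reachable_image (update_mem_of_forall_mem hf' hp)
      rw [image_update_of_mem hr] at hreach
      rw [hc]
      exact hreach.fires (fires_insert hpre hpost hp_notMem_image)
    · rw [← image_update_of_mem hr]
      exact hτ.reachable_image (update_mem_of_forall_mem hf' hc)

end IsTerritory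

end PetriNet

end GhostsOfEmpires

open GhostsOfEmpires in
theorem statement11_general {Place Trans Stmt State : Type*}
    (N : PetriNet Place Trans Stmt State)
    (τ : Set (Set Place)) (hτ : N.IsTerritory τ) (t : Trans)
    (h : N.extendable t τ) :
    N.IsTerritory (N.extendT t τ) ∧ N.terrFires τ t (N.extendT t τ) := by
  obtain ⟨⟨f, hf, -⟩, ⟨p, hpre⟩, ⟨p', hpost⟩, hext⟩ := h
  obtain ⟨hr, hp⟩ := hf p (hpre ▸ rfl)
  have hp' : ∀ q ∈ f p, ¬ N.coRelated p' q :=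
    fun q hq => hext _ hr ⟨p, hp, hpre ▸ rfl⟩ q hq p' (hpost ▸ rfl)
  have hterr := hτ.insert_insert_sdiff hr hp hpre hpost hp'
  rw [hτ.extendT_eq hpre hr hp, hpost, Set.union_singleton]
  exact ⟨hterr, PetriNet.terrFires_insert_sdiff hpre hpost hr hp (hterr.1 _ (Set.mem_insert _ _))
    (Set.mem_insert _ _)⟩

open GhostsOfEmpires in
/-- If a territory `τ` is extendable with a transition `t`, then the
extended territory `extend(t,τ)` is a territory, and `τ ▷t extend(t,τ)` holds. -/
theorem statement11 {Place Trans Stmt State : Type*}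
    [Fintype Place] [Fintype Trans] [Fintype Stmt]
    (N : PetriNet Place Trans Stmt State)
    (τ : Set (Set Place)) (hτ : N.IsTerritory τ) (t : Trans)
    (h : N.extendable t τ) :
    N.IsTerritory (N.extendT t τ) ∧ N.terrFires τ t (N.extendT t τ) :=
  statement11_general N τ hτ t h
end

section
/- If a territory τ is extendable with a transition t, then extend(t,τ) ▷t extend(t,τ) holds. Moreover, if τ' ▷t' τ and bystanders(t',τ') ⊆ bystanders(t,τ), then τ' ▷t' extend(t,τ) also holds. -/
open GhostsOfEmpires in
/-- If a territory `τ` is extendable with a transition `t`, then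
`extend(t,τ) ▷t extend(t,τ)` holds. Moreover, if `τ' ▷t' τ` and
`bystanders(t',τ') ⊆ bystanders(t,τ)`, then `τ' ▷t' extend(t,τ)` also holds. -/
theorem statement12 {Place Trans Stmt State : Type*}
    [Fintype Place] [Fintype Trans] [Fintype Stmt]
    (N : PetriNet Place Trans Stmt State)
    (τ : Set (Set Place)) (hτ : N.IsTerritory τ) (t : Trans)
    (h : N.extendable t τ) :
    N.terrFires (N.extendT t τ) t (N.extendT t τ) ∧
    ∀ (τ' : Set (Set Place)) (t' : Trans), N.IsTerritory τ' →
      N.terrFires τ' t' τ → N.bystanders t' τ' ⊆ N.bystanders t τ →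
      N.terrFires τ' t' (N.extendT t τ) := by
  classical
  obtain ⟨⟨f0, hf0, -⟩, ⟨p0, hpre⟩, ⟨pp, hpost⟩, hcompat⟩ := h
  obtain ⟨hreg, hdisj, -⟩ := hτ
  have hsymm : ∀ p q : Place, N.coRelated p q → N.coRelated q p := by
    rintro p q ⟨h1, m, hm, hp, hq⟩
    exact ⟨Ne.symm h1, m, hm, hq, hp⟩
  have hregU : ∀ r ∈ τ, (r ∩ N.pre t).Nonempty → N.IsRegion (r ∪ N.post t) := by
    intro r hrτ hrpre
    obtain ⟨q, hq⟩ := hrpre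
    refine ⟨⟨q, Or.inl hq.1⟩, ?_⟩
    intro p1 h1 p2 h2
    rcases h1 with h1 | h1 <;> rcases h2 with h2 | h2
    · exact (hreg r hrτ).2 p1 h1 p2 h2
    · intro hc; exact hcompat r hrτ ⟨q, hq⟩ p1 h1 p2 h2 (hsymm _ _ hc)
    · exact hcompat r hrτ ⟨q, hq⟩ p2 h2 p1 h1
    · rw [hpost] at h1 h2
      have e1 : p1 = pp := h1
      have e2 : p2 = pp := h2
      rintro ⟨hne, -⟩
      exact hne (e1.trans e2.symm)
  have hp0 : p0 ∈ N.pre t := by rw [hpre]; exact rfl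
  have hpp : pp ∈ N.post t := by rw [hpost]; exact rfl
  have hr0τ : f0 p0 ∈ τ := (hf0 p0 hp0).1
  have hp0r0 : p0 ∈ f0 p0 := (hf0 p0 hp0).2
  have hr0pre : (f0 p0 ∩ N.pre t).Nonempty := ⟨p0, hp0r0, hp0⟩
  have haE : f0 p0 ∪ N.post t ∈ N.extendT t τ := Or.inr ⟨f0 p0, hr0τ, hr0pre, rfl⟩
  constructor
  · refine ⟨fun _ => f0 p0 ∪ N.post t, fun _ => f0 p0 ∪ N.post t, ?_, ?_, ?_, ?_, ?_⟩
    · intro p hp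
      exact ⟨haE, Or.inl (by rw [hpre] at hp; exact (show p = p0 from hp) ▸ hp0r0)⟩
    · intro p1 h1 p2 h2 hne
      rw [hpre] at h1 h2
      exact absurd ((show p1 = p0 from h1).trans (show p2 = p0 from h2).symm) hne
    · intro p hp
      exact ⟨hregU _ hr0τ hr0pre, Or.inr hp⟩
    · intro p1 h1 p2 h2 hne
      rw [hpost] at h1 h2
      exact absurd ((show p1 = pp from h1).trans (show p2 = pp from h2).symm) hne
    · ext x
      constructor
      · intro hx
        by_cases hxa : x = f0 p0 ∪ N.post t
        · exact Or.inr ⟨pp, hpp, hxa⟩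
        · exact Or.inl ⟨hx, fun hmem => by
            obtain ⟨p, -, hp⟩ := hmem
            exact hxa hp⟩
      · rintro (⟨hx, -⟩ | ⟨p, -, rfl⟩)
        · exact hx
        · exact haE
  · intro τ' t' hτ' hfire hbys
    obtain ⟨f, f', hf1, hf2, hf'1, hf'2, heq⟩ := hfire
    have hBτ : ∀ p ∈ N.post t', f' p ∈ τ := by
      intro p hp; rw [heq]; exact Or.inr ⟨p, hp, rfl⟩
    set g : Place → Set Place :=
      fun p => if (f' p ∩ N.pre t).Nonempty then f' p ∪ N.post t else f' p with hg
    have hsub1 : ∀ p, f' p ⊆ g p := by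
      intro p; rw [hg]; dsimp only; split
      · exact Set.subset_union_left
      · exact le_rfl
    have hsub2 : ∀ p, g p ⊆ f' p ∪ N.post t := by
      intro p; rw [hg]; dsimp only; split
      · exact le_rfl
      · exact Set.subset_union_left
    have hgpos : ∀ p, (f' p ∩ N.pre t).Nonempty → g p = f' p ∪ N.post t := by
      intro p hp; rw [hg]; dsimp only; rw [if_pos hp]
    have hgneg : ∀ p, ¬ (f' p ∩ N.pre t).Nonempty → g p = f' p := by
      intro p hp; rw [hg]; dsimp only; rw [if_neg hp]
    have hAeq : τ' \ {r | ∃ p ∈ N.pre t', r = f p} = N.bystanders t' τ' := by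
      ext r
      constructor
      · rintro ⟨hrτ', hrA⟩
        refine ⟨hrτ', ?_⟩
        by_contra hne
        obtain ⟨q, hqr, hqpre⟩ := Set.nonempty_iff_ne_empty.2 hne
        by_cases hrf : r = f q
        · exact hrA ⟨q, hqpre, hrf⟩
        · have hdis := hτ'.2.1 r hrτ' (f q) (hf1 q hqpre).1 hrf
          have hmem : q ∈ r ∩ f q := ⟨hqr, (hf1 q hqpre).2⟩
          rw [hdis] at hmem; exact hmem
      · rintro ⟨hrτ', hre⟩
        refine ⟨hrτ', ?_⟩
        rintro ⟨q, hqpre, rfl⟩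
        have hmem : q ∈ f q ∩ N.pre t' := ⟨(hf1 q hqpre).2, hqpre⟩
        rw [hre] at hmem; exact hmem
    refine ⟨f, g, hf1, hf2, ?_, ?_, ?_⟩
    · intro p hp
      refine ⟨?_, hsub1 p (hf'1 p hp).2⟩
      by_cases hc : (f' p ∩ N.pre t).Nonempty
      · rw [hgpos p hc]; exact hregU _ (hBτ p hp) hc
      · rw [hgneg p hc]; exact (hf'1 p hp).1
    · intro p1 h1 p2 h2 hne hgeq
      have hne' := hf'2 p1 h1 p2 h2 hne
      have hdis := hdisj (f' p1) (hBτ p1 h1) (f' p2) (hBτ p2 h2) hne'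
      have hs1 : f' p1 ⊆ N.post t := by
        intro x hx
        rcases hsub2 p2 ((hgeq ▸ hsub1 p1 hx : x ∈ g p2)) with hx2 | hx2
        · have : x ∈ f' p1 ∩ f' p2 := ⟨hx, hx2⟩
          rw [hdis] at this; exact this.elim
        · exact hx2
      have hs2 : f' p2 ⊆ N.post t := by
        intro x hx
        rcases hsub2 p1 ((hgeq ▸ hsub1 p2 hx : x ∈ g p1)) with hx2 | hx2
        · have : x ∈ f' p1 ∩ f' p2 := ⟨hx2, hx⟩
          rw [hdis] at this; exact this.elim
        · exact hx2
      rw [hpost] at hs1 hs2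
      have e1 : f' p1 = {pp} :=
        Set.Subset.antisymm hs1 (Set.singleton_subset_iff.2
          ((show p1 = pp from hs1 (hf'1 p1 h1).2) ▸ (hf'1 p1 h1).2))
      have e2 : f' p2 = {pp} :=
        Set.Subset.antisymm hs2 (Set.singleton_subset_iff.2
          ((show p2 = pp from hs2 (hf'1 p2 h2).2) ▸ (hf'1 p2 h2).2))
      exact hne' (e1.trans e2.symm)
    · ext x
      constructor
      · rintro (⟨hxτ, hxpre⟩ | ⟨r, hrτ, hrpre, rfl⟩)
        · rw [heq] at hxτ
          rcases hxτ with hxl | ⟨p, hp, rfl⟩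
          · exact Or.inl hxl
          · refine Or.inr ⟨p, hp, ?_⟩
            rw [hgneg p (by rw [hxpre]; exact fun ⟨y, hy⟩ => hy)]
        · rw [heq] at hrτ
          rcases hrτ with hrl | ⟨p, hp, rfl⟩
          · have : r ∈ N.bystanders t τ := hbys (hAeq ▸ hrl)
            rw [this.2] at hrpre
            exact absurd hrpre (by simp)
          · exact Or.inr ⟨p, hp, (hgpos p hrpre).symm⟩
      · rintro (hxl | ⟨p, hp, rfl⟩)
        · have : x ∈ N.bystanders t τ := hbys (hAeq ▸ hxl)
          exact Or.inl this
        · by_cases hc : (f' p ∩ N.pre t).Nonempty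
          · rw [hgpos p hc]
            exact Or.inr ⟨f' p, hBτ p hp, hc, rfl⟩
          · rw [hgneg p hc]
            exact Or.inl ⟨hBτ p hp, Set.not_nonempty_iff_eq_empty.1 hc⟩
end

section
/- If τ ▷t τ holds for a territory τ and a transition t, and τ is extendable with a transition t', then extend(t',τ) ▷t extend(t',τ) holds. -/
open GhostsOfEmpires in
/-- If `τ ▷t τ` holds for a territory `τ` and a transition `t`, and `τ`
is extendable with a transition `t'`, then `extend(t',τ) ▷t extend(t',τ)` holds. -/
theorem statement13 {Place Trans Stmt State : Type*}
    [Fintype Place] [Fintype Trans] [Fintype Stmt]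
    (N : PetriNet Place Trans Stmt State)
    (τ : Set (Set Place)) (hτ : N.IsTerritory τ) (t t' : Trans)
    (h1 : N.terrFires τ t τ) (h2 : N.extendable t' τ) :
    N.terrFires (N.extendT t' τ) t (N.extendT t' τ) := by
  classical
  obtain ⟨f, f', hf, hfinj, hf', hf'inj, heq⟩ := h1
  obtain ⟨hen, ⟨p0, hpre⟩, ⟨p0', hpost⟩, hext⟩ := h2
  have hsymm : ∀ a b, N.coRelated a b → N.coRelated b a := by
    rintro a b ⟨hne, m, hm, ha, hb⟩; exact ⟨hne.symm, m, hm, hb, ha⟩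
  set e : Set Place → Set Place :=
    fun r => if r ∩ N.pre t' = ∅ then r else r ∪ N.post t' with he
  have hsub : ∀ r : Set Place, r ⊆ e r := by
    intro r
    by_cases c : r ∩ N.pre t' = ∅
    · simp [he, c]
    · simp only [he, if_neg c]; exact Set.subset_union_left
  have hmemp0 : ∀ r : Set Place, ¬ (r ∩ N.pre t' = ∅) → p0 ∈ r := by
    intro r hc
    rcases Set.nonempty_iff_ne_empty.2 hc with ⟨x, hx1, hx2⟩
    rw [hpre] at hx2
    rcases hx2 with rfl
    exact hx1
  have hdisj := hτ.2.1
  have einj : ∀ r1 ∈ τ, ∀ r2 ∈ τ, e r1 = e r2 → r1 = r2 := by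
    intro r1 h1 r2 h2 hee
    by_contra hne
    have hd := hdisj r1 h1 r2 h2 hne
    by_cases c1 : r1 ∩ N.pre t' = ∅ <;> by_cases c2 : r2 ∩ N.pre t' = ∅
    · simp only [he, if_pos c1, if_pos c2] at hee; exact hne hee
    · simp only [he, if_pos c1, if_neg c2] at hee
      have hp0 : p0 ∈ r1 := hee ▸ Or.inl (hmemp0 r2 c2)
      have : p0 ∈ r1 ∩ N.pre t' := ⟨hp0, by rw [hpre]; rfl⟩
      rw [c1] at this; exact this
    · simp only [he, if_neg c1, if_pos c2] at hee
      have hp0 : p0 ∈ r2 := hee ▸ Or.inl (hmemp0 r1 c1)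
      have : p0 ∈ r2 ∩ N.pre t' := ⟨hp0, by rw [hpre]; rfl⟩
      rw [c2] at this; exact this
    · have : p0 ∈ r1 ∩ r2 := ⟨hmemp0 r1 c1, hmemp0 r2 c2⟩
      rw [hd] at this; exact this
  have himg : N.extendT t' τ = e '' τ := by
    ext x
    constructor
    · rintro (⟨hxτ, hx⟩ | ⟨r, hr, hne, rfl⟩)
      · exact ⟨x, hxτ, by simp [he, hx]⟩
      · exact ⟨r, hr, by simp [he, Set.nonempty_iff_ne_empty.1 hne]⟩
    · rintro ⟨r, hr, rfl⟩
      by_cases c : r ∩ N.pre t' = ∅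
      · left; simp only [he, if_pos c]; exact ⟨hr, c⟩
      · right; exact ⟨r, hr, Set.nonempty_iff_ne_empty.2 c, by simp [he, c]⟩
  have hfτ : ∀ p ∈ N.pre t, f p ∈ τ := fun p hp => (hf p hp).1
  have hf'τ : ∀ p ∈ N.post t, f' p ∈ τ := by
    intro p hp
    rw [heq]
    exact Or.inr ⟨p, hp, rfl⟩
  have hreg : ∀ p ∈ N.post t, N.IsRegion (e (f' p)) := by
    intro p hp
    by_cases c : f' p ∩ N.pre t' = ∅
    · simpa only [he, if_pos c] using (hf' p hp).1
    · have hR := (hf' p hp).1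
      have hmem : f' p ∈ τ := hf'τ p hp
      have hx := hext (f' p) hmem (Set.nonempty_iff_ne_empty.2 c)
      have hev : e (f' p) = f' p ∪ N.post t' := by simp only [he, if_neg c]
      rw [hev]
      constructor
      · exact ⟨hR.1.choose, Or.inl hR.1.choose_spec⟩
      · rintro p1 (h1 | h1) p2 (h2 | h2)
        · exact hR.2 p1 h1 p2 h2
        · exact fun hc => hx p1 h1 p2 h2 (hsymm _ _ hc)
        · exact hx p2 h2 p1 h1
        · rw [hpost] at h1 h2
          rcases h1 with rfl; rcases h2 with rfl
          rintro ⟨hne, _⟩; exact hne rfl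
  refine ⟨fun p => e (f p), fun p => e (f' p), ?_, ?_, ?_, ?_, ?_⟩
  · intro p hp
    exact ⟨by rw [himg]; exact ⟨f p, hfτ p hp, rfl⟩, hsub (f p) (hf p hp).2⟩
  · intro p1 h1 p2 h2 hne hee
    exact hfinj p1 h1 p2 h2 hne (einj _ (hfτ p1 h1) _ (hfτ p2 h2) hee)
  · intro p hp
    exact ⟨hreg p hp, hsub (f' p) (hf' p hp).2⟩
  · intro p1 h1 p2 h2 hne hee
    exact hf'inj p1 h1 p2 h2 hne (einj _ (hf'τ p1 h1) _ (hf'τ p2 h2) hee)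
  · rw [himg]
    ext x
    constructor
    · rintro ⟨r, hr, rfl⟩
      have hr' : r ∈ (τ \ {r | ∃ p ∈ N.pre t, r = f p}) ∪
          {r | ∃ p ∈ N.post t, r = f' p} := by rw [← heq]; exact hr
      rcases hr' with ⟨hrτ, hrA⟩ | ⟨p, hp, rfl⟩
      · left
        refine ⟨⟨r, hr, rfl⟩, ?_⟩
        rintro ⟨p, hp, hee⟩
        exact hrA ⟨p, hp, einj r hr (f p) (hfτ p hp) hee⟩
      · right; exact ⟨p, hp, rfl⟩
    · rintro (⟨⟨r, hr, rfl⟩, -⟩ | ⟨p, hp, rfl⟩)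
      · exact ⟨r, hr, rfl⟩
      · exact ⟨f' p, hf'τ p hp, rfl⟩
end
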